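/- Let f : ℝ^d → ℝ be twice continuously differentiable, μ-strongly convex (μI ⪯ ∇²f(x) for all x), L-smooth (∇²f(x) ⪯ LI for all x), and M-strongly self-concordant. Fix x̃ ∈ ℝ^d, T ≥ 1, 1 ≤ k < d, and γ with 0 ≤ γ < 1 − k/d. Let x^0, …, x^T ∈ ℝ^d satisfy ‖x^t − x̃‖ ≤ γ^t·‖x^0 − x̃‖ for all t ∈ {0,…,T}, and set r_t := ‖x^t − x^{t−1}‖_{∇²f(x^{t−1})}. Let B^0 be symmetric with B^0 ⪰ ∇²f(x^0), and for t = 1,…,T define P^{t−1} := (1 + M·r_t/2)²·B^{t−1} and B^t := SR-k(P^{t−1}, ∇²f(x^t), Ū(P^{t−1}, ∇²f(x^t))), assuming at each step that either the SR-k directions satisfy P^{t−1}·Ū = ∇²f(x^t)·Ū or the Gram matrix Ū^⊤(P^{t−1} − ∇²f(x^t))Ū is invertible. Then for all t ∈ {1,…,T}: ν(B^t, ∇²f(x^t)) ≤ (1 − k/d)^t·exp(4M√L·‖x^0 − x̃‖/(1 − γ))·(ν(B^0, ∇²f(x^0)) + ‖x^0 − x̃‖·4·d·M·L^{3/2}·μ^{-1}/(1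 − (1 − k/d)^{-1}·γ)). -/

import Mathlib

open Matrix

noncomputable section

abbrev Evec (d : ℕ) := EuclideanSpace ℝ (Fin d)

/-- Gradient vector: coordinates are the partial derivatives. -/
noncomputable def gradE {d : ℕ} (f : Evec d → ℝ) (x : Evec d) : Evec d :=
  WithLp.toLp 2 (fun i => fderiv ℝ f x (EuclideanSpace.single i 1))

/-- Hessian matrix: entries are the second partial derivatives. -/
noncomputable def hessE {d : ℕ} (f : Evec d → ℝ) (x : Evec d) : Matrix (Fin d) (Fin d) ℝ :=
  Matrix.of fun i j =>
    iteratedFDeriv ℝ 2 f x ![EuclideanSpace.single i 1, EuclideanSpace.single j 1]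

/-- Spectral norm of a matrix (operator norm on Euclidean space). -/
noncomputable def specNorm {d : ℕ} (A : Matrix (Fin d) (Fin d) ℝ) : ℝ :=
  ‖Matrix.toEuclideanCLM (𝕜 := ℝ) A‖

/-- ‖v‖_A = √(vᵀ A v). -/
noncomputable def anorm {d : ℕ} (A : Matrix (Fin d) (Fin d) ℝ) (v : Evec d) : ℝ :=
  Real.sqrt ((fun i => v i) ⬝ᵥ A.mulVec (fun i => v i))

/-- Matrix-vector product on Euclidean space. -/
noncomputable def mulVecE {d : ℕ} (A : Matrix (Fin d) (Fin d) ℝ) (v : Evec d) : Evec d :=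
  WithLp.toLp 2 (fun i => A.mulVec (fun j => v j) i)

open scoped Classical in
/-- SR-k update: SR-k(G, A, U) = G if GU = AU, otherwise
G − (G−A)U(Uᵀ(G−A)U)⁻¹Uᵀ(G−A). -/
noncomputable def SRk {d k : ℕ} (G A : Matrix (Fin d) (Fin d) ℝ)
    (U : Matrix (Fin d) (Fin k) ℝ) : Matrix (Fin d) (Fin d) ℝ :=
  if G * U = A * U then G
  else G - (G - A) * U * (Uᵀ * (G - A) * U)⁻¹ * Uᵀ * (G - A)

/-- ν(G, A) = d·(L/μ)·tr(G − A)/tr(A). -/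
noncomputable def nuMeas {d : ℕ} (L μ : ℝ) (G A : Matrix (Fin d) (Fin d) ℝ) : ℝ :=
  (d : ℝ) * (L / μ) * (G - A).trace / A.trace

/- ======================= auxiliary lemmas ======================= -/

section Aux

variable {d k : ℕ}

lemma psd_diag_nonneg {A : Matrix (Fin d) (Fin d) ℝ} (hA : A.PosSemidef) (i : Fin d) :
    0 ≤ A i i := by
  have := hA.dotProduct_mulVec_nonneg (Pi.single i 1)
  simpa [dotProduct, mulVec, Pi.single_apply, Finset.sum_ite_eq] using this

lemma psd_trace_nonneg {A : Matrix (Fin d) (Fin d) ℝ} (hA : A.PosSemidef) :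
    0 ≤ A.trace :=
  Finset.sum_nonneg fun i _ => psd_diag_nonneg hA i

lemma trace_mono' {A B : Matrix (Fin d) (Fin d) ℝ} (h : (B - A).PosSemidef) :
    A.trace ≤ B.trace := by
  have := psd_trace_nonneg h
  rw [trace_sub] at this; linarith

lemma psd_smul' {A : Matrix (Fin d) (Fin d) ℝ} {c : ℝ} (hc : 0 ≤ c) (hA : A.PosSemidef) :
    (c • A).PosSemidef := by
  refine Matrix.PosSemidef.of_dotProduct_mulVec_nonneg ?_ fun x => ?_
  · unfold Matrix.IsHermitian
    rw [conjTranspose_smul, hA.1]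
    simp
  · rw [smul_mulVec, dotProduct_smul, smul_eq_mul]
    exact mul_nonneg hc (hA.dotProduct_mulVec_nonneg x)

lemma psd_iff_eq_transpose_mul_self {E : Matrix (Fin d) (Fin d) ℝ} :
    E.PosSemidef ↔ ∃ N : Matrix (Fin d) (Fin d) ℝ, E = Nᴴ * N := by
  open scoped MatrixOrder in
  constructor
  · intro hE
    obtain ⟨N, hN⟩ := CStarAlgebra.nonneg_iff_eq_star_mul_self.mp hE.nonneg
    exact ⟨N, hN⟩
  · rintro ⟨N, rfl⟩
    exact Matrix.posSemidef_conjTranspose_mul_self N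

lemma schur' {E : Matrix (Fin d) (Fin d) ℝ} (hE : E.PosSemidef)
    (U : Matrix (Fin d) (Fin k) ℝ) (hdet : IsUnit (Uᵀ * E * U).det) :
    (E - E * U * (Uᵀ * E * U)⁻¹ * Uᵀ * E).PosSemidef ∧
    (E * U * (Uᵀ * E * U)⁻¹ * Uᵀ * E).PosSemidef := by
  obtain ⟨N, hN⟩ := psd_iff_eq_transpose_mul_self.mp hE
  have hNt : Nᴴ = Nᵀ := by ext i j; simp [conjTranspose_apply]
  set W : Matrix (Fin d) (Fin k) ℝ := N * U with hW
  set S : Matrix (Fin k) (Fin k) ℝ := Uᵀ * E * U with hS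
  have hSW : S = Wᵀ * W := by
    rw [hS, hN, hNt, hW, transpose_mul]
    simp only [Matrix.mul_assoc]
  set P : Matrix (Fin d) (Fin d) ℝ := W * S⁻¹ * Wᵀ with hP
  have hSsymm : Sᵀ = S := by rw [hSW, transpose_mul, transpose_transpose]
  have hSinv : (S⁻¹)ᵀ = S⁻¹ := by rw [Matrix.transpose_nonsing_inv, hSsymm]
  have hSS : S⁻¹ * S = 1 := Matrix.nonsing_inv_mul _ hdet
  have hPsymm : Pᵀ = P := by
    rw [hP]
    simp only [transpose_mul, transpose_transpose, hSinv, Matrix.mul_assoc]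
  have hPP : P * P = P := by
    have h1 : P * P = W * (S⁻¹ * ((Wᵀ * W) * (S⁻¹ * Wᵀ))) := by
      rw [hP]; simp only [Matrix.mul_assoc]
    rw [h1, ← hSW, ← Matrix.mul_assoc S⁻¹ S, hSS, Matrix.one_mul, hP, hW]
    simp only [Matrix.mul_assoc]
  have hC : E * U * S⁻¹ * Uᵀ * E = Nᵀ * (P * N) := by
    rw [hN, hNt, hP, hW, transpose_mul]
    simp only [Matrix.mul_assoc]
  have hIP : (1 - P).PosSemidef := by
    refine psd_iff_eq_transpose_mul_self.mpr ⟨1 - P, ?_⟩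
    have h2 : (1 - P)ᴴ = 1 - P := by
      rw [conjTranspose_eq_transpose_of_trivial, transpose_sub, transpose_one, hPsymm]
    rw [h2, Matrix.sub_mul, Matrix.mul_sub, Matrix.mul_sub, hPP]
    simp
  have hPpsd : P.PosSemidef := by
    refine psd_iff_eq_transpose_mul_self.mpr ⟨P, ?_⟩
    rw [conjTranspose_eq_transpose_of_trivial, hPsymm, hPP]
  constructor
  · have h3 : E - E * U * S⁻¹ * Uᵀ * E = Nᵀ * ((1 - P) * N) := by
      rw [hC, hN, hNt, Matrix.sub_mul, Matrix.one_mul, Matrix.mul_sub]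
    rw [h3, ← Matrix.mul_assoc, ← hNt]
    exact hIP.conjTranspose_mul_mul_same N
  · rw [hC, ← Matrix.mul_assoc, ← hNt]
    exact hPpsd.conjTranspose_mul_mul_same N

lemma sel_entry {E : Matrix (Fin d) (Fin d) ℝ} (idx : Fin k → Fin d)
    {U : Matrix (Fin d) (Fin k) ℝ}
    (hU : U = Matrix.of (fun p q => if p = idx q then (1 : ℝ) else 0))
    (l m : Fin k) : (Uᵀ * E * U) l m = E (idx l) (idx m) := by
  subst hU
  simp [Matrix.mul_apply, transpose_apply, Finset.sum_ite_eq, ite_mul, mul_ite]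

lemma sum_sel {g : Fin d → ℝ} (idx : Fin k → Fin d) (hinj : Function.Injective idx)
    (hg : ∀ j, 0 ≤ g j) (hgreedy : ∀ (l : Fin k) (j : Fin d), j ∉ Set.range idx →
      g j ≤ g (idx l)) (hk1 : 1 ≤ k) (hkd : k < d) :
    ((k : ℝ) / d) * (∑ j, g j) ≤ ∑ l, g (idx l) := by
  classical
  set s : Finset (Fin d) := Finset.image idx Finset.univ with hs
  have hcard : s.card = k := by
    rw [hs, Finset.card_image_of_injective _ hinj, Finset.card_univ, Fintype.card_fin]
  have hsum_s : ∑ j ∈ s, g j = ∑ l, g (idx l) := by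
    rw [hs, Finset.sum_image (fun a _ b _ h => hinj h)]
  set Ss := ∑ l, g (idx l) with hSs
  have hSsnonneg : 0 ≤ Ss := Finset.sum_nonneg fun l _ => hg _
  have hnonsel : ∀ j ∉ s, g j ≤ Ss / k := by
    intro j hj
    have hjr : j ∉ Set.range idx := by
      intro ⟨l, hl⟩; exact hj (by rw [hs]; exact Finset.mem_image.mpr ⟨l, Finset.mem_univ _, hl⟩)
    have hk0 : (0:ℝ) < k := by exact_mod_cast hk1
    rw [le_div_iff₀ hk0]
    calc g j * k = ∑ _l : Fin k, g j := by
          simp [mul_comm]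
    _ ≤ Ss := Finset.sum_le_sum fun l _ => hgreedy l j hjr
  have hsplit : ∑ j, g j = Ss + ∑ j ∈ sᶜ, g j := by
    rw [← hsum_s, ← Finset.sum_add_sum_compl s g]
  have hcompl : ∑ j ∈ sᶜ, g j ≤ (d - k : ℝ) * (Ss / k) := by
    have hc : (sᶜ.card : ℝ) = (d : ℝ) - k := by
      rw [Finset.card_compl, hcard, Fintype.card_fin]
      have := le_of_lt hkd
      push_cast [Nat.cast_sub this]
      ring
    calc ∑ j ∈ sᶜ, g j ≤ ∑ _j ∈ sᶜ, Ss / k := Finset.sum_le_sum fun j hj =>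
          hnonsel j (Finset.mem_compl.mp hj)
    _ = (sᶜ.card : ℝ) * (Ss / k) := by rw [Finset.sum_const, nsmul_eq_mul]
    _ = (d - k : ℝ) * (Ss / k) := by rw [hc]
  have hk0 : (0:ℝ) < k := by exact_mod_cast hk1
  have hd0 : (0:ℝ) < d := by
    exact_mod_cast Nat.lt_of_lt_of_le (Nat.lt_of_lt_of_le Nat.zero_lt_one hk1) (le_of_lt hkd)
  have h1 : ∑ j, g j ≤ (d / k : ℝ) * Ss := by
    rw [hsplit]
    have : Ss + (d - k : ℝ) * (Ss / k) = (d / k : ℝ) * Ss := by field_simp; ring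
    linarith [hcompl]
  calc ((k : ℝ) / d) * (∑ j, g j) ≤ ((k : ℝ) / d) * ((d / k : ℝ) * Ss) := by
        apply mul_le_mul_of_nonneg_left h1 (by positivity)
  _ = Ss := by field_simp

lemma srk_step (hk1 : 1 ≤ k) (hkd : k < d)
    {P H : Matrix (Fin d) (Fin d) ℝ} (hPH : (P - H).PosSemidef)
    (idx : Fin k → Fin d) (hinj : Function.Injective idx)
    {U : Matrix (Fin d) (Fin k) ℝ}
    (hU : U = Matrix.of (fun p q => if p = idx q then (1 : ℝ) else 0))
    (hgreedy : ∀ (l : Fin k) (j : Fin d), j ∉ Set.range idx →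
      (P - H) j j ≤ (P - H) (idx l) (idx l))
    (hdisj : P * U = H * U ∨ IsUnit (Uᵀ * (P - H) * U).det) :
    (SRk P H U - H).PosSemidef ∧
    (SRk P H U - H).trace ≤ (1 - (k : ℝ) / d) * (P - H).trace := by
  classical
  set E := P - H with hE
  have hkd' : (k : ℝ) / d ≤ 1 := by
    rw [div_le_one (by exact_mod_cast Nat.lt_trans (Nat.lt_of_lt_of_le Nat.zero_lt_one hk1) hkd)]
    exact_mod_cast le_of_lt hkd
  by_cases hc : P * U = H * U
  · have hEU : E * U = 0 := by rw [hE, Matrix.sub_mul, hc, sub_self]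
    have hdiag0 : ∀ l : Fin k, E (idx l) (idx l) = 0 := by
      intro l
      have h0 : (E * U) (idx l) l = 0 := by rw [hEU]; rfl
      rw [Matrix.mul_apply] at h0
      subst hU
      simpa [Finset.sum_ite_eq, mul_ite] using h0
    have hall : ∀ j, E j j = 0 := by
      intro j
      by_cases hj : j ∈ Set.range idx
      · obtain ⟨l, rfl⟩ := hj; exact hdiag0 l
      · have l0 : Fin k := ⟨0, hk1⟩
        exact le_antisymm (by rw [← hdiag0 l0]; exact hgreedy l0 j hj) (psd_diag_nonneg hPH j)
    have htr0 : E.trace = 0 := by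
      simp only [Matrix.trace, Matrix.diag]
      exact Finset.sum_eq_zero fun i _ => hall i
    have hSRk : SRk P H U = P := by rw [SRk, if_pos hc]
    refine ⟨by rw [hSRk]; exact hPH, ?_⟩
    rw [hSRk, ← hE, htr0, mul_zero]
  · have hdet : IsUnit (Uᵀ * E * U).det := hdisj.resolve_left hc
    set S := Uᵀ * E * U with hS
    set C := E * U * S⁻¹ * Uᵀ * E with hC
    have hSRk : SRk P H U = P - C := by rw [SRk, if_neg hc]
    have hEC := schur' hPH U hdet
    have hsub : SRk P H U - H = E - C := by rw [hSRk, hE]; abel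
    refine ⟨by rw [hsub]; exact hEC.1, ?_⟩
    have hUCU : Uᵀ * C * U = S := by
      have h1 : Uᵀ * C * U = S * S⁻¹ * S := by
        rw [hC, hS]; simp only [Matrix.mul_assoc]
      rw [h1, Matrix.mul_nonsing_inv _ hdet, Matrix.one_mul]
    have hCd : ∀ l : Fin k, C (idx l) (idx l) = E (idx l) (idx l) := by
      intro l
      have h2 : C (idx l) (idx l) = S l l := by
        rw [← sel_entry (E := C) idx hU l l, hUCU]
      rw [h2]
      exact sel_entry idx hU l l
    have hCtr : ∑ l, E (idx l) (idx l) ≤ C.trace := by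
      have himg : ∑ j ∈ Finset.image idx Finset.univ, C j j
          = ∑ l, C (idx l) (idx l) :=
        Finset.sum_image (fun a _ b _ h => hinj h)
      calc ∑ l, E (idx l) (idx l) = ∑ l, C (idx l) (idx l) :=
            Finset.sum_congr rfl fun l _ => (hCd l).symm
      _ = ∑ j ∈ Finset.image idx Finset.univ, C j j := himg.symm
      _ ≤ ∑ j, C j j := Finset.sum_le_sum_of_subset_of_nonneg
            (Finset.subset_univ _) (fun j _ _ => psd_diag_nonneg hEC.2 j)
      _ = C.trace := rfl
    have hgsum := sum_sel idx hinj (fun j => psd_diag_nonneg hPH j) hgreedy hk1 hkd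
    have htrE : E.trace = ∑ j, E j j := rfl
    have htrsub : (E - C).trace = E.trace - C.trace := trace_sub E C
    rw [hsub, htrsub]
    have : ((k:ℝ)/d) * E.trace ≤ C.trace := le_trans (by rw [htrE]; exact hgsum) hCtr
    linarith

variable {d : ℕ}

lemma quad_form_le {H : Matrix (Fin d) (Fin d) ℝ} {L : ℝ}
    (h : (L • (1 : Matrix (Fin d) (Fin d) ℝ) - H).PosSemidef) (v : Fin d → ℝ) :
    v ⬝ᵥ H.mulVec v ≤ L * (v ⬝ᵥ v) := by
  have h2 := h.dotProduct_mulVec_nonneg v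
  rw [star_trivial, Matrix.sub_mulVec, dotProduct_sub, smul_mulVec,
    one_mulVec, dotProduct_smul, smul_eq_mul] at h2
  linarith

lemma quad_form_ge {H : Matrix (Fin d) (Fin d) ℝ} {μ : ℝ}
    (h : (H - μ • (1 : Matrix (Fin d) (Fin d) ℝ)).PosSemidef) (v : Fin d → ℝ) :
    μ * (v ⬝ᵥ v) ≤ v ⬝ᵥ H.mulVec v := by
  have h2 := h.dotProduct_mulVec_nonneg v
  rw [star_trivial, Matrix.sub_mulVec, dotProduct_sub, smul_mulVec,
    one_mulVec, dotProduct_smul, smul_eq_mul] at h2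
  linarith

lemma dot_self_eq_norm_sq (v : Evec d) :
    (fun i => v i) ⬝ᵥ (fun i => v i) = ‖v‖ ^ 2 := by
  rw [EuclideanSpace.norm_eq, Real.sq_sqrt (Finset.sum_nonneg fun i _ => sq_nonneg _)]
  simp [dotProduct, Real.norm_eq_abs, sq_abs, sq]

lemma anorm_nonneg (A : Matrix (Fin d) (Fin d) ℝ) (v : Evec d) : 0 ≤ anorm A v :=
  Real.sqrt_nonneg _

lemma anorm_neg (A : Matrix (Fin d) (Fin d) ℝ) (v : Evec d) : anorm A (-v) = anorm A v := by
  unfold anorm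
  congr 1
  have hv : (fun i => (-v) i) = -(fun i => v i) := by funext i; simp
  rw [hv, Matrix.mulVec_neg, dotProduct_neg, neg_dotProduct, neg_neg]

lemma anorm_le_sqrt {H : Matrix (Fin d) (Fin d) ℝ} {L : ℝ} (hL : 0 ≤ L)
    (h : (L • (1 : Matrix (Fin d) (Fin d) ℝ) - H).PosSemidef) (v : Evec d) :
    anorm H v ≤ Real.sqrt L * ‖v‖ := by
  unfold anorm
  calc Real.sqrt ((fun i => v i) ⬝ᵥ H.mulVec (fun i => v i))
      ≤ Real.sqrt (L * ((fun i => v i) ⬝ᵥ (fun i => v i))) :=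
        Real.sqrt_le_sqrt (quad_form_le h _)
  _ = Real.sqrt L * ‖v‖ := by
        rw [dot_self_eq_norm_sq, Real.sqrt_mul hL, Real.sqrt_sq (norm_nonneg v)]

lemma trace_smul_one (c : ℝ) : (c • (1 : Matrix (Fin d) (Fin d) ℝ)).trace = c * d := by
  rw [Matrix.trace_smul, Matrix.trace_one, smul_eq_mul]
  simp

lemma M_nonneg (hd : 0 < d) {M μ : ℝ} (hμ : 0 < μ)
    (Hf : Evec d → Matrix (Fin d) (Fin d) ℝ)
    (hstrong : ∀ x, (Hf x - μ • (1 : Matrix (Fin d) (Fin d) ℝ)).PosSemidef)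
    (hsc : ∀ x y z w : Evec d,
      ((M * anorm (Hf z) (y - x)) • Hf w - (Hf y - Hf x)).PosSemidef) : 0 ≤ M := by
  set i0 : Fin d := ⟨0, hd⟩
  set y : Evec d := EuclideanSpace.single i0 (1 : ℝ) with hy
  have hyy : (fun i => y i) ⬝ᵥ (fun i => y i) = 1 := by
    simp [hy, dotProduct, EuclideanSpace.single_apply, ite_mul, Finset.sum_ite_eq']
  set a : ℝ := anorm (Hf 0) (y - 0) with ha
  have hapos : 0 < a := by
    rw [ha, sub_zero, anorm]
    apply Real.sqrt_pos.mpr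
    calc (0:ℝ) < μ * 1 := by linarith
    _ = μ * ((fun i => y i) ⬝ᵥ (fun i => y i)) := by rw [hyy]
    _ ≤ _ := quad_form_ge (hstrong 0) _
  have h1 := hsc 0 y 0 0
  have h2 := hsc y 0 0 0
  have haneg : anorm (Hf 0) (0 - y) = a := by
    rw [zero_sub, anorm_neg, ha, sub_zero]
  rw [haneg] at h2
  have hsum := h1.add h2
  have heq : (M * a) • Hf 0 - (Hf y - Hf 0) + ((M * a) • Hf 0 - (Hf 0 - Hf y))
      = (2 * (M * a)) • Hf 0 := by
    ext i j
    simp [Matrix.add_apply, Matrix.sub_apply, Matrix.smul_apply, smul_eq_mul]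
    ring
  rw [heq] at hsum
  have htr := psd_trace_nonneg hsum
  rw [Matrix.trace_smul, smul_eq_mul] at htr
  have htrH : 0 < (Hf 0).trace := by
    have := trace_mono' (hstrong 0)
    rw [trace_smul_one] at this
    have hd' : (1:ℝ) ≤ d := by exact_mod_cast hd
    nlinarith
  nlinarith [mul_pos hapos htrH]

lemma geo_le {q : ℝ} (h0 : 0 ≤ q) (h1 : q < 1) (n : ℕ) :
    ∑ j ∈ Finset.range n, q ^ j ≤ 1 / (1 - q) := by
  have hgm := geom_sum_mul q n
  have hq : 0 ≤ q ^ n := pow_nonneg h0 n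
  rw [le_div_iff₀ (by linarith)]
  nlinarith

lemma one_le_one_add_half_sq {s : ℝ} (hs : 0 ≤ s) : 1 ≤ (1 + s / 2) ^ 2 := by nlinarith

lemma nu_step {ρ s c Dv X τ τ' h1 h2 g : ℝ}
    (hρ0 : 0 < ρ) (hs0 : 0 ≤ s) (hc : c = (1 + s/2)^2) (hDv0 : 0 ≤ Dv)
    (h1pos : 0 < h1) (h2pos : 0 < h2) (hτ0 : 0 ≤ τ)
    (hX : X = Dv * τ / h1)
    (htr' : τ' ≤ ρ * (c * τ + (c * h1 - h2)))
    (hsc2 : h1 ≤ (1 + s) * h2)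
    (hsg : s ≤ g) :
    Dv * τ' / h2 ≤ ρ * Real.exp (2 * g) * (X + Dv * (2 * g)) := by
  have hg0 : 0 ≤ g := le_trans hs0 hsg
  have hc1 : 1 ≤ c := by rw [hc]; nlinarith
  have hc0 : 0 ≤ c := le_trans zero_le_one hc1
  have hνt0 : 0 ≤ X := by
    rw [hX]; exact div_nonneg (mul_nonneg hDv0 hτ0) h1pos.le
  have i1 : Dv * τ' / h2 ≤ ρ * ((c * (1+s)) * X + Dv * (c * (1+s) - 1)) := by
    rw [div_le_iff₀ h2pos]
    have k1 : Dv * τ' ≤ Dv * (ρ * (c * τ + (c * h1 - h2))) :=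
      mul_le_mul_of_nonneg_left htr' hDv0
    have k2 : Dv * τ = X * h1 := by
      rw [hX, div_mul_cancel₀ _ (ne_of_gt h1pos)]
    have k3 : c * (X * h1) ≤ c * (X * ((1+s) * h2)) :=
      mul_le_mul_of_nonneg_left (mul_le_mul_of_nonneg_left hsc2 hνt0) hc0
    have k4 : c * h1 - h2 ≤ (c * (1+s) - 1) * h2 := by
      nlinarith [mul_le_mul_of_nonneg_left hsc2 hc0]
    have k5 : c * (Dv * τ) + Dv * (c * h1 - h2)
        ≤ (c * (1+s)) * (X * h2) + Dv * ((c * (1+s) - 1) * h2) := by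
      rw [k2]
      nlinarith [mul_le_mul_of_nonneg_left k4 hDv0]
    nlinarith [mul_le_mul_of_nonneg_left k5 hρ0.le]
  have l1 : 1 + s/2 ≤ Real.exp (s/2) := by
    have := Real.add_one_le_exp (s/2); linarith
  have l2 : c ≤ Real.exp s := by
    rw [hc]
    calc (1 + s/2)^2 ≤ (Real.exp (s/2))^2 := by
          apply pow_le_pow_left₀ (by linarith) l1
    _ = Real.exp s := by
          rw [sq, ← Real.exp_add]
          norm_num
  have l3 : 1 + s ≤ Real.exp s := by
    have := Real.add_one_le_exp s; linarith
  have i2 : c * (1+s) ≤ Real.exp (2*s) := by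
    calc c * (1+s) ≤ Real.exp s * Real.exp s :=
          mul_le_mul l2 l3 (by linarith) (Real.exp_pos s).le
    _ = Real.exp (2*s) := by rw [← Real.exp_add]; ring_nf
  have i3 : c * (1+s) - 1 ≤ 2 * s * Real.exp (2*s) := by
    have l4 : 1 - 2*s ≤ Real.exp (-(2*s)) := by
      have := Real.add_one_le_exp (-(2*s)); linarith
    have l5 : Real.exp (-(2*s)) * Real.exp (2*s) = 1 := by
      rw [← Real.exp_add]; simp
    nlinarith [Real.exp_pos (2*s), mul_le_mul_of_nonneg_right l4 (Real.exp_pos (2*s)).le]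
  have i4 : Dv * τ' / h2 ≤ ρ * Real.exp (2*s) * (X + Dv * (2*s)) := by
    have m1 : (c * (1+s)) * X ≤ Real.exp (2*s) * X :=
      mul_le_mul_of_nonneg_right i2 hνt0
    have m2 : Dv * (c * (1+s) - 1) ≤ Dv * (2 * s * Real.exp (2*s)) :=
      mul_le_mul_of_nonneg_left i3 hDv0
    calc Dv * τ' / h2 ≤ ρ * ((c * (1+s)) * X + Dv * (c * (1+s) - 1)) := i1
    _ ≤ ρ * (Real.exp (2*s) * X + Dv * (2 * s * Real.exp (2*s))) := by
          apply mul_le_mul_of_nonneg_left (by linarith) hρ0.le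
    _ = ρ * Real.exp (2*s) * (X + Dv * (2*s)) := by ring
  calc Dv * τ' / h2 ≤ ρ * Real.exp (2*s) * (X + Dv * (2*s)) := i4
  _ ≤ ρ * Real.exp (2 * g) * (X + Dv * (2 * g)) := by
      apply mul_le_mul
      · apply mul_le_mul_of_nonneg_left _ hρ0.le
        exact Real.exp_le_exp.mpr (by linarith)
      · have : Dv * (2*s) ≤ Dv * (2 * g) :=
          mul_le_mul_of_nonneg_left (by linarith) hDv0
        linarith
      · have : 0 ≤ Dv * (2*s) := mul_nonneg hDv0 (by linarith)
        linarith
      · exact mul_nonneg hρ0.le (Real.exp_pos _).le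

end Aux

set_option maxHeartbeats 2000000 in
theorem stmt_12 {d k : ℕ} (hk1 : 1 ≤ k) (hkd : k < d)
    (f : Evec d → ℝ) (M μ L : ℝ) (hμ : 0 < μ) (hμL : μ ≤ L)
    (hC2 : ContDiff ℝ 2 f)
    (hstrong : ∀ x : Evec d,
      (hessE f x - μ • (1 : Matrix (Fin d) (Fin d) ℝ)).PosSemidef)
    (hsmooth : ∀ x : Evec d,
      (L • (1 : Matrix (Fin d) (Fin d) ℝ) - hessE f x).PosSemidef)
    (hsc : ∀ x y z w : Evec d,
      ((M * anorm (hessE f z) (y - x)) • hessE f w - (hessE f y - hessE f x)).PosSemidef)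
    (xt : Evec d) (T : ℕ) (hT : 1 ≤ T) (γ : ℝ)
    (hγ0 : 0 ≤ γ) (hγ1 : γ < 1 - (k : ℝ) / d)
    (x : ℕ → Evec d)
    (hdist : ∀ t ≤ T, ‖x t - xt‖ ≤ γ ^ t * ‖x 0 - xt‖)
    (B : ℕ → Matrix (Fin d) (Fin d) ℝ)
    (hB0symm : (B 0).IsSymm)
    (hB0 : (B 0 - hessE f (x 0)).PosSemidef)
    (hupdate : ∀ t < T, ∃ (idx : Fin k → Fin d) (U : Matrix (Fin d) (Fin k) ℝ),
      Function.Injective idx ∧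
      U = Matrix.of (fun p q => if p = idx q then (1 : ℝ) else 0) ∧
      (∀ (l : Fin k) (j : Fin d), j ∉ Set.range idx →
        ((1 + M * anorm (hessE f (x t)) (x (t+1) - x t) / 2) ^ 2 • B t - hessE f (x (t+1))) j j
          ≤ ((1 + M * anorm (hessE f (x t)) (x (t+1) - x t) / 2) ^ 2 • B t
              - hessE f (x (t+1))) (idx l) (idx l)) ∧
      (((1 + M * anorm (hessE f (x t)) (x (t+1) - x t) / 2) ^ 2 • B t) * U
          = hessE f (x (t+1)) * U
        ∨ IsUnit (Uᵀ * ((1 + M * anorm (hessE f (x t)) (x (t+1) - x t) / 2) ^ 2 • B t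
              - hessE f (x (t+1))) * U).det) ∧
      B (t+1) = SRk ((1 + M * anorm (hessE f (x t)) (x (t+1) - x t) / 2) ^ 2 • B t)
        (hessE f (x (t+1))) U) :
    ∀ t, 1 ≤ t → t ≤ T →
      nuMeas L μ (B t) (hessE f (x t)) ≤
        (1 - (k : ℝ) / d) ^ t * Real.exp (4 * M * Real.sqrt L * ‖x 0 - xt‖ / (1 - γ))
          * (nuMeas L μ (B 0) (hessE f (x 0))
              + ‖x 0 - xt‖ * (4 * (d : ℝ) * M * L ^ ((3 : ℝ) / 2) * μ⁻¹)
                / (1 - (1 - (k : ℝ) / d)⁻¹ * γ)) := by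
  -- basic positivity facts
  have hd0 : 0 < d := lt_of_le_of_lt (Nat.zero_le k) hkd
  have hdR : (0:ℝ) < d := by exact_mod_cast hd0
  have hkR : (0:ℝ) < k := by exact_mod_cast hk1
  have hL0 : 0 < L := lt_of_lt_of_le hμ hμL
  have hM : 0 ≤ M := M_nonneg hd0 hμ (fun y => hessE f y) hstrong hsc
  set ρ : ℝ := 1 - (k:ℝ)/d with hρdef
  have hρ0 : 0 < ρ := by
    rw [hρdef]
    have h1 : (k:ℝ)/d < 1 := (div_lt_one hdR).mpr (by exact_mod_cast hkd)
    linarith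
  have hρ1 : ρ ≤ 1 := by
    rw [hρdef]
    have : 0 ≤ (k:ℝ)/d := by positivity
    linarith
  have hγρ : γ < ρ := hγ1
  have hγlt1 : γ < 1 := lt_of_lt_of_le hγρ hρ1
  set R : ℝ := ‖x 0 - xt‖ with hRdef
  have hR0 : 0 ≤ R := norm_nonneg _
  have hLμ : 0 < L / μ := div_pos hL0 hμ
  set Dv : ℝ := (d:ℝ) * (L/μ) with hDv
  have hDv0 : 0 ≤ Dv := by rw [hDv]; exact mul_nonneg hdR.le hLμ.le
  set a : ℝ := 2 * M * Real.sqrt L * R with hadef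
  have ha0 : 0 ≤ a :=
    mul_nonneg (mul_nonneg (mul_nonneg (by norm_num) hM) (Real.sqrt_nonneg L)) hR0
  -- Hessian facts
  have hHtr_lb : ∀ y : Evec d, μ * d ≤ (hessE f y).trace := by
    intro y
    have := trace_mono' (hstrong y)
    rwa [trace_smul_one] at this
  have hHtr_pos : ∀ y : Evec d, 0 < (hessE f y).trace := fun y =>
    lt_of_lt_of_le (mul_pos hμ hdR) (hHtr_lb y)
  have hHpsd : ∀ y : Evec d, (hessE f y).PosSemidef := by
    intro y
    have h1 := (hstrong y).add (psd_smul' (le_of_lt hμ) (Matrix.PosSemidef.one))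
    simpa using h1
  have hnu_nonneg : ∀ t : ℕ, (B t - hessE f (x t)).PosSemidef →
      0 ≤ nuMeas L μ (B t) (hessE f (x t)) := by
    intro t hpsd
    unfold nuMeas
    exact div_nonneg (mul_nonneg (mul_nonneg hdR.le hLμ.le) (psd_trace_nonneg hpsd))
      (le_of_lt (hHtr_pos _))
  -- the key one-step inequality
  have key : ∀ t : ℕ, t < T → (B t - hessE f (x t)).PosSemidef →
      (B (t+1) - hessE f (x (t+1))).PosSemidef ∧
      nuMeas L μ (B (t+1)) (hessE f (x (t+1))) ≤
        ρ * Real.exp (2 * (a * γ ^ t)) *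
          (nuMeas L μ (B t) (hessE f (x t)) + Dv * (2 * (a * γ ^ t))) := by
    intro t htT hpsd
    obtain ⟨idx, U, hinj, hU, hgreedy, hdisj, hBt1⟩ := hupdate t htT
    set r : ℝ := anorm (hessE f (x t)) (x (t+1) - x t) with hr
    have hr0 : 0 ≤ r := anorm_nonneg _ _
    set s : ℝ := M * r with hs
    have hs0 : 0 ≤ s := mul_nonneg hM hr0
    set c : ℝ := (1 + s / 2) ^ 2 with hc
    have hc1 : 1 ≤ c := by rw [hc]; exact one_le_one_add_half_sq hs0
    have hc0 : 0 ≤ c := le_trans zero_le_one hc1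
    -- E is PSD
    have hsc1 : (s • hessE f (x t) - (hessE f (x (t+1)) - hessE f (x t))).PosSemidef := by
      have h1 := hsc (x t) (x (t+1)) (x t) (x t)
      rw [← hr, ← hs] at h1
      exact h1
    have hEpsd : (c • B t - hessE f (x (t+1))).PosSemidef := by
      have hdecomp : c • B t - hessE f (x (t+1)) =
          c • (B t - hessE f (x t)) +
            ((s • hessE f (x t) - (hessE f (x (t+1)) - hessE f (x t))) +
              (s^2/4) • hessE f (x t)) := by
        ext i j
        simp only [Matrix.add_apply, Matrix.sub_apply, Matrix.smul_apply, smul_eq_mul, hc]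
        ring
      rw [hdecomp]
      exact (psd_smul' hc0 hpsd).add (hsc1.add (psd_smul' (by positivity) (hHpsd _)))
    -- s ≤ a * γ ^ t (derived before making scalars opaque)
    have hsale : s ≤ a * γ ^ t := by
      have n1 : ‖x (t+1) - x t‖ ≤ ‖x (t+1) - xt‖ + ‖x t - xt‖ := by
        have heq2 : x (t+1) - x t = (x (t+1) - xt) - (x t - xt) := by abel
        rw [heq2]; exact norm_sub_le _ _
      have n2 := hdist (t+1) (by omega)
      have n3 := hdist t (by omega)
      have n4 : γ ^ (t+1) ≤ γ ^ t := by
        rw [pow_succ]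
        calc γ ^ t * γ ≤ γ ^ t * 1 :=
              mul_le_mul_of_nonneg_left hγlt1.le (pow_nonneg hγ0 t)
        _ = γ ^ t := mul_one _
      have n5 : ‖x (t+1) - x t‖ ≤ 2 * γ ^ t * R := by
        have := mul_le_mul_of_nonneg_right n4 hR0
        linarith
      have n6 : r ≤ Real.sqrt L * ‖x (t+1) - x t‖ := by
        rw [hr]; exact anorm_le_sqrt hL0.le (hsmooth _) _
      have n7 : r ≤ Real.sqrt L * (2 * γ ^ t * R) :=
        le_trans n6 (mul_le_mul_of_nonneg_left n5 (Real.sqrt_nonneg L))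
      calc s = M * r := hs
      _ ≤ M * (Real.sqrt L * (2 * γ ^ t * R)) := mul_le_mul_of_nonneg_left n7 hM
      _ = a * γ ^ t := by rw [hadef]; ring
    have hstep := srk_step hk1 hkd hEpsd idx hinj hU hgreedy hdisj
    rw [← hBt1] at hstep
    obtain ⟨hpsd', htr'⟩ := hstep
    refine ⟨hpsd', ?_⟩
    -- trace inequalities
    have hτ0 : 0 ≤ (B t - hessE f (x t)).trace := psd_trace_nonneg hpsd
    have hτ'0 : 0 ≤ (B (t+1) - hessE f (x (t+1))).trace := psd_trace_nonneg hpsd'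
    have h1pos : 0 < (hessE f (x t)).trace := hHtr_pos _
    have h2pos : 0 < (hessE f (x (t+1))).trace := hHtr_pos _
    have htrE : (c • B t - hessE f (x (t+1))).trace
        = c * (B t - hessE f (x t)).trace
          + (c * (hessE f (x t)).trace - (hessE f (x (t+1))).trace) := by
      rw [trace_sub, trace_sub, Matrix.trace_smul, smul_eq_mul]
      ring
    have hsc2 : (hessE f (x t)).trace ≤ (1 + s) * (hessE f (x (t+1))).trace := by
      have hpsd2 := hsc (x (t+1)) (x t) (x t) (x (t+1))
      have hneg : x t - x (t+1) = -(x (t+1) - x t) := (neg_sub _ _).symm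
      rw [hneg, anorm_neg, ← hr, ← hs] at hpsd2
      have h3 := psd_trace_nonneg hpsd2
      rw [trace_sub, trace_sub, Matrix.trace_smul, smul_eq_mul] at h3
      linarith
    rw [htrE] at htr'
    -- pass to scalar arithmetic
    simp only [nuMeas]
    rw [← hDv]
    set τ : ℝ := (B t - hessE f (x t)).trace with hτ
    set τ' : ℝ := (B (t+1) - hessE f (x (t+1))).trace with hτ'
    set h1 : ℝ := (hessE f (x t)).trace with hh1
    set h2 : ℝ := (hessE f (x (t+1))).trace with hh2
    clear_value τ τ' h1 h2 r s c
    clear hsc1 hEpsd hBt1 hgreedy hdisj hU htrE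
    exact nu_step hρ0 hs0 hc hDv0 h1pos h2pos hτ0 rfl htr' hsc2 hsale
  -- the main induction
  have main : ∀ t : ℕ, t ≤ T → (B t - hessE f (x t)).PosSemidef ∧
      nuMeas L μ (B t) (hessE f (x t)) ≤
        ρ ^ t * Real.exp (2 * a * (∑ j ∈ Finset.range t, γ ^ j)) *
          (nuMeas L μ (B 0) (hessE f (x 0))
            + (2 * Dv * a) * ∑ j ∈ Finset.range t, (γ/ρ) ^ j) := by
    intro t
    induction t with
    | zero =>
      intro _
      refine ⟨hB0, ?_⟩
      simp
    | succ t ih =>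
      intro ht1
      obtain ⟨hpsd, hbound⟩ := ih (by omega)
      obtain ⟨hpsd', hkey⟩ := key t (by omega) hpsd
      refine ⟨hpsd', ?_⟩
      have hν00 : 0 ≤ nuMeas L μ (B 0) (hessE f (x 0)) := hnu_nonneg 0 hB0
      have hEt1 : 1 ≤ Real.exp (2 * a * (∑ j ∈ Finset.range t, γ ^ j)) := by
        apply Real.one_le_exp
        have hsg : 0 ≤ ∑ j ∈ Finset.range t, γ ^ j :=
          Finset.sum_nonneg fun j _ => pow_nonneg hγ0 j
        exact mul_nonneg (mul_nonneg (by norm_num) ha0) hsg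
      have hsum0 : 0 ≤ ∑ j ∈ Finset.range t, (γ/ρ) ^ j :=
        Finset.sum_nonneg fun j _ => pow_nonneg (div_nonneg hγ0 hρ0.le) j
      have hρt : ρ ^ t ≠ 0 := pow_ne_zero t (ne_of_gt hρ0)
      have hfold : ρ ^ t * (γ/ρ) ^ t = γ ^ t := by
        rw [div_pow]
        field_simp
      have hexp : Real.exp (2 * a * (∑ j ∈ Finset.range (t+1), γ ^ j))
          = Real.exp (2 * a * (∑ j ∈ Finset.range t, γ ^ j)) * Real.exp (2 * (a * γ ^ t)) := by
        rw [Finset.sum_range_succ, mul_add, Real.exp_add]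
        congr 1
        ring
      rw [hexp, Finset.sum_range_succ]
      set Et := Real.exp (2 * a * (∑ j ∈ Finset.range t, γ ^ j)) with hEt
      set e' := Real.exp (2 * (a * γ ^ t)) with he'
      have he'0 : 0 < e' := Real.exp_pos _
      set ν0 := nuMeas L μ (B 0) (hessE f (x 0)) with hν0
      set St := ∑ j ∈ Finset.range t, (γ/ρ) ^ j with hSt
      -- hkey : ν_{t+1} ≤ ρ * e' * (ν_t + Dv * (2 * (a*γ^t)))
      -- hbound : ν_t ≤ ρ^t * Et * (ν0 + 2Dv a St)
      have hDva0 : 0 ≤ 2 * Dv * a := mul_nonneg (mul_nonneg (by norm_num) hDv0) ha0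
      have hXnn : 0 ≤ ρ ^ t * Et * (ν0 + (2 * Dv * a) * St) := by
        apply mul_nonneg (mul_nonneg (pow_nonneg hρ0.le t) (Real.exp_pos _).le)
        have : 0 ≤ (2 * Dv * a) * St := mul_nonneg hDva0 hsum0
        linarith
      have step1 : nuMeas L μ (B (t+1)) (hessE f (x (t+1)))
          ≤ ρ * e' * (ρ ^ t * Et * (ν0 + (2 * Dv * a) * St) + Dv * (2 * (a * γ ^ t))) := by
        refine le_trans hkey ?_
        apply mul_le_mul_of_nonneg_left _ (mul_nonneg hρ0.le he'0.le)
        linarith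
      refine le_trans step1 ?_
      have hgoal : ρ ^ (t+1) * (Et * e') * (ν0 + (2 * Dv * a) * (St + (γ/ρ) ^ t))
          = ρ * e' * (ρ ^ t * Et * (ν0 + (2 * Dv * a) * St)
              + Et * (Dv * (2 * (a * (ρ ^ t * (γ/ρ) ^ t))))) := by
        ring
      rw [hfold] at hgoal
      rw [hgoal]
      apply mul_le_mul_of_nonneg_left _ (mul_nonneg hρ0.le he'0.le)
      have h10 : 0 ≤ Dv * (2 * (a * γ ^ t)) := by
        apply mul_nonneg hDv0
        apply mul_nonneg (by norm_num) (mul_nonneg ha0 (pow_nonneg hγ0 t))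
      have h9 : Dv * (2 * (a * γ ^ t)) ≤ Et * (Dv * (2 * (a * γ ^ t))) :=
        le_mul_of_one_le_left h10 hEt1
      linarith
  -- conclude
  intro t _ htT
  obtain ⟨hpsd, hbound⟩ := main t htT
  refine le_trans hbound ?_
  have hν00 : 0 ≤ nuMeas L μ (B 0) (hessE f (x 0)) := hnu_nonneg 0 hB0
  have hγρ1 : γ / ρ < 1 := (div_lt_one hρ0).mpr hγρ
  have hγρ0 : 0 ≤ γ / ρ := div_nonneg hγ0 hρ0.le
  have hsle : ∑ j ∈ Finset.range t, γ ^ j ≤ 1 / (1 - γ) := geo_le hγ0 hγlt1 t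
  have hsle2 : ∑ j ∈ Finset.range t, (γ/ρ) ^ j ≤ 1 / (1 - γ/ρ) := geo_le hγρ0 hγρ1 t
  have hexple : Real.exp (2 * a * (∑ j ∈ Finset.range t, γ ^ j))
      ≤ Real.exp (4 * M * Real.sqrt L * R / (1 - γ)) := by
    apply Real.exp_le_exp.mpr
    have h11 : 2 * a * (∑ j ∈ Finset.range t, γ ^ j) ≤ 2 * a * (1 / (1 - γ)) := by
      apply mul_le_mul_of_nonneg_left hsle (by linarith)
    calc 2 * a * (∑ j ∈ Finset.range t, γ ^ j) ≤ 2 * a * (1 / (1 - γ)) := h11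
    _ = 4 * M * Real.sqrt L * R / (1 - γ) := by rw [hadef]; ring
  have hL32 : L ^ ((3:ℝ)/2) = L * Real.sqrt L := by
    rw [Real.sqrt_eq_rpow, show ((3:ℝ)/2) = 1 + 1/2 by norm_num, Real.rpow_add hL0,
      Real.rpow_one]
  have htail : (2 * Dv * a) * ∑ j ∈ Finset.range t, (γ/ρ) ^ j
      ≤ R * (4 * (d:ℝ) * M * L ^ ((3:ℝ)/2) * μ⁻¹) / (1 - ρ⁻¹ * γ) := by
    have hDva0 : 0 ≤ 2 * Dv * a := mul_nonneg (mul_nonneg (by norm_num) hDv0) ha0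
    have h12 : (2 * Dv * a) * ∑ j ∈ Finset.range t, (γ/ρ) ^ j
        ≤ (2 * Dv * a) * (1 / (1 - γ/ρ)) := by
      apply mul_le_mul_of_nonneg_left hsle2 hDva0
    refine le_trans h12 (le_of_eq ?_)
    rw [hL32, hadef, hDv]
    rw [show ρ⁻¹ * γ = γ / ρ from by rw [inv_mul_eq_div]]
    have hden : (0:ℝ) < 1 - γ/ρ := by linarith [hγρ1]
    field_simp
    ring
  apply mul_le_mul
  · exact mul_le_mul_of_nonneg_left hexple (pow_nonneg hρ0.le t)
  · linarith
  · have : 0 ≤ (2 * Dv * a) * ∑ j ∈ Finset.range t, (γ/ρ) ^ j := by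
      apply mul_nonneg (mul_nonneg (mul_nonneg (by norm_num) hDv0) ha0)
      exact Finset.sum_nonneg fun j _ => pow_nonneg hγρ0 j
    linarith
  · exact mul_nonneg (pow_nonneg hρ0.le t) (Real.exp_pos _).le

end
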